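/- arXiv:2412.20533 — 5 statements merged into one kernel-verified Lean document; each statement's English description precedes it below -/
import Mathlib

section
/- Let G be a connected weighted graph with weight w: E(G) → [0,∞), and let Φ be a continuous symmetric triangle function that is monotone increasing in both variables, satisfies Φ(0,0)=0, the identity Φ(x,Φ(y,z)) = Φ(z,Φ(x,y)), the multiset subadditivity condition (Φ*(A) ≤ Φ(Φ*(B), Φ*(C)) whenever multiset A ⊆ B ∪ C), and Φ(a,b) ≥ max{a,b}. Define d_Φ^w(u,v) = inf{w_Φ(P) : P a path joining u and v}, where w_Φ(P) = Φ*(w(e₁),...,w(eₙ)) over edges of P (and 0 for the empty path). Then d_Φ^w satisfies the generalized triangle inequality d_Φ^w(u,v) ≤ Φ(d_Φ^w(u,p), d_Φ^w(p,v)) for all vertices u, v, p, i.e., d_Φ^w is a Φ-pseudosemimetric on V(G). -/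
open scoped NNReal
open SimpleGraph

/-- Iterated triangle function: `PhiStar Φ x [y₁,...,yₖ] = Φ*(x, y₁, ..., yₖ)`. -/
def PhiStar (Φ : ℝ≥0 → ℝ≥0 → ℝ≥0) : ℝ≥0 → List ℝ≥0 → ℝ≥0
  | x, [] => x
  | x, y :: l => Φ x (PhiStar Φ y l)

/-- `Φ`-weight of a (possibly empty) list of weights. -/
def listPhi (Φ : ℝ≥0 → ℝ≥0 → ℝ≥0) : List ℝ≥0 → ℝ≥0
  | [] => 0
  | x :: l => PhiStar Φ x l

/-- `d` is a `Φ`-pseudosemimetric: symmetric, vanishing on the diagonal, and satisfying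
the generalized triangle inequality with triangle function `Φ`. -/
def IsPseudoSemimetricWith {X : Type*} (Φ : ℝ≥0 → ℝ≥0 → ℝ≥0) (d : X → X → ℝ≥0) : Prop :=
  (∀ x y, d x y = d y x) ∧ (∀ x, d x x = 0) ∧ ∀ x y z, d x y ≤ Φ (d x z) (d y z)

/-- Standing conditions on a continuous triangle function `Φ`. -/
def Standing (Φ : ℝ≥0 → ℝ≥0 → ℝ≥0) : Prop :=
  Continuous (fun q : ℝ≥0 × ℝ≥0 => Φ q.1 q.2) ∧
  (∀ x y, Φ x y = Φ y x) ∧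
  (∀ a, Monotone (Φ a)) ∧ (∀ b, Monotone fun a => Φ a b) ∧
  Φ 0 0 = 0 ∧
  (∀ x y z, Φ x (Φ y z) = Φ z (Φ x y)) ∧
  (∀ (a b c : ℝ≥0) (as bs cs : List ℝ≥0),
      (a ::ₘ (as : Multiset ℝ≥0)) ≤ (b ::ₘ (bs : Multiset ℝ≥0)) + (c ::ₘ (cs : Multiset ℝ≥0)) →
      PhiStar Φ a as ≤ Φ (PhiStar Φ b bs) (PhiStar Φ c cs)) ∧
  (∀ a b, max a b ≤ Φ a b)

/-- The shortest-`Φ`-path function `d_Φ^w`. -/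
noncomputable def dPhi {V : Type*} (G : SimpleGraph V) (Φ : ℝ≥0 → ℝ≥0 → ℝ≥0)
    (w : Sym2 V → ℝ≥0) (u v : V) : ℝ≥0 :=
  sInf {x | ∃ p : G.Walk u v, p.IsPath ∧ listPhi Φ (p.edges.map w) = x}

/-!
The reverse of a path is a path with the same multiset of weights, and commutativity together
with `Φ x (Φ y z) = Φ z (Φ x y)` makes `Φ*` depend only on that multiset; this gives symmetry.
For the triangle inequality, concatenate near-optimal paths `u → p` and `p → v` and shortcut the
resulting walk to a path: its weights form a submultiset of the union of the two weight lists, so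
multiset subadditivity bounds its `Φ`-weight, and continuity of `Φ` lets the slack go to zero.
-/

open Set

theorem le_apply₂_of_forall_gt {α β γ : Type*} [TopologicalSpace α] [LinearOrder α]
    [OrderTopology α] [DenselyOrdered α] [NoMaxOrder α] [TopologicalSpace β] [LinearOrder β]
    [OrderTopology β] [DenselyOrdered β] [NoMaxOrder β] [TopologicalSpace γ] [Preorder γ]
    [OrderClosedTopology γ] {f : α → β → γ} (hf : Continuous fun q : α × β => f q.1 q.2)
    {c : γ} {a : α} {b : β} (h : ∀ x y, a < x → b < y → c ≤ f x y) : c ≤ f a b := by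
  have hclosed : IsClosed {q : α × β | c ≤ f q.1 q.2} := isClosed_le continuous_const hf
  have hmem : (a, b) ∈ closure (Ioi a ×ˢ Ioi b) := by
    rw [closure_prod_eq, closure_Ioi, closure_Ioi]
    exact ⟨le_rfl, le_rfl⟩
  exact hclosed.closure_subset_iff.2 (fun q hq => h _ _ hq.1 hq.2) hmem

def PhiSubadditive (Φ : ℝ≥0 → ℝ≥0 → ℝ≥0) : Prop :=
  ∀ (a b c : ℝ≥0) (as bs cs : List ℝ≥0),
    (a ::ₘ (as : Multiset ℝ≥0)) ≤ (b ::ₘ (bs : Multiset ℝ≥0)) + (c ::ₘ (cs : Multiset ℝ≥0)) →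
    PhiStar Φ a as ≤ Φ (PhiStar Φ b bs) (PhiStar Φ c cs)

section ListPhi

variable {Φ : ℝ≥0 → ℝ≥0 → ℝ≥0}

theorem listPhi_cons_cons (x y : ℝ≥0) (l : List ℝ≥0) :
    listPhi Φ (x :: y :: l) = Φ x (listPhi Φ (y :: l)) :=
  rfl

theorem listPhi_perm (hcomm : ∀ x y, Φ x y = Φ y x)
    (hrot : ∀ x y z, Φ x (Φ y z) = Φ z (Φ x y)) {l₁ l₂ : List ℝ≥0} (h : l₁.Perm l₂) :
    listPhi Φ l₁ = listPhi Φ l₂ := by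
  induction h with
  | nil => rfl
  | @cons x l₁ l₂ h ih =>
    match l₁, l₂, h with
    | [], [], _ => rfl
    | _ :: _, _ :: _, _ => rw [listPhi_cons_cons, listPhi_cons_cons, ih]
    | [], _ :: _, h => exact absurd h.length_eq (by simp)
    | _ :: _, [], h => exact absurd h.length_eq (by simp)
  | swap x y l =>
    cases l with
    | nil => exact hcomm y x
    | cons z l =>
      simp only [listPhi_cons_cons]
      rw [hrot y x, hcomm y x, ← hrot]
  | trans _ _ ih₁ ih₂ => exact ih₁.trans ih₂

theorem exists_phiStar_eq_listPhi (l : List ℝ≥0) :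
    ∃ b bs, PhiStar Φ b bs = listPhi Φ l ∧ (l : Multiset ℝ≥0) ≤ b ::ₘ (bs : Multiset ℝ≥0) := by
  cases l with
  | nil => exact ⟨0, [], rfl, Multiset.zero_le _⟩
  | cons b bs => exact ⟨b, bs, rfl, le_rfl⟩

theorem listPhi_le_of_le_add (hsub : PhiSubadditive Φ) {l lp lq : List ℝ≥0}
    (h : (l : Multiset ℝ≥0) ≤ lp + lq) : listPhi Φ l ≤ Φ (listPhi Φ lp) (listPhi Φ lq) := by
  cases l with
  | nil => exact zero_le
  | cons a as =>
    obtain ⟨b, bs, hb, hlp⟩ := exists_phiStar_eq_listPhi (Φ := Φ) lp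
    obtain ⟨c, cs, hc, hlq⟩ := exists_phiStar_eq_listPhi (Φ := Φ) lq
    rw [← hb, ← hc]
    exact hsub a b c as bs cs (h.trans (add_le_add hlp hlq))

end ListPhi

section DPhi

variable {V : Type*} {G : SimpleGraph V} {Φ : ℝ≥0 → ℝ≥0 → ℝ≥0} {w : Sym2 V → ℝ≥0}

theorem dPhi_le_of_isPath {u v : V} {p : G.Walk u v} (hp : p.IsPath) :
    dPhi G Φ w u v ≤ listPhi Φ (p.edges.map w) :=
  csInf_le (OrderBot.bddBelow _) ⟨p, hp, rfl⟩

theorem dPhi_self (u : V) : dPhi G Φ w u u = 0 :=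
  le_antisymm (dPhi_le_of_isPath Walk.IsPath.nil) zero_le

theorem dPhi_comm (hcomm : ∀ x y, Φ x y = Φ y x)
    (hrot : ∀ x y z, Φ x (Φ y z) = Φ z (Φ x y)) (u v : V) :
    dPhi G Φ w u v = dPhi G Φ w v u := by
  have key : ∀ u v : V, {x | ∃ p : G.Walk u v, p.IsPath ∧ listPhi Φ (p.edges.map w) = x} ⊆
      {x | ∃ p : G.Walk v u, p.IsPath ∧ listPhi Φ (p.edges.map w) = x} := by
    rintro u v _ ⟨p, hp, rfl⟩
    refine ⟨p.reverse, hp.reverse, ?_⟩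
    rw [Walk.edges_reverse, List.map_reverse]
    exact listPhi_perm hcomm hrot (List.reverse_perm _)
  exact congrArg sInf ((key u v).antisymm (key v u))

theorem SimpleGraph.Reachable.exists_isPath_listPhi_lt {u v : V} (h : G.Reachable u v) {r : ℝ≥0}
    (hr : dPhi G Φ w u v < r) : ∃ p : G.Walk u v, p.IsPath ∧ listPhi Φ (p.edges.map w) < r := by
  classical
  obtain ⟨p⟩ := h
  have hne : {x | ∃ q : G.Walk u v, q.IsPath ∧ listPhi Φ (q.edges.map w) = x}.Nonempty :=
    ⟨_, p.bypass, p.bypass_isPath, rfl⟩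
  obtain ⟨_, ⟨q, hq, rfl⟩, hlt⟩ := exists_lt_of_csInf_lt hne hr
  exact ⟨q, hq, hlt⟩

theorem dPhi_le_of_append (hsub : PhiSubadditive Φ) {u p v : V} (P : G.Walk u p)
    (Q : G.Walk p v) :
    dPhi G Φ w u v ≤ Φ (listPhi Φ (P.edges.map w)) (listPhi Φ (Q.edges.map w)) := by
  classical
  have hpath := (P.append Q).bypass_isPath
  have hedges : ((P.append Q).bypass.edges : Multiset (Sym2 V)) ≤ (P.append Q).edges :=
    Multiset.coe_le.mpr (hpath.edges_nodup.subperm (P.append Q).edges_bypass_subset_edges)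
  refine (dPhi_le_of_isPath hpath).trans (listPhi_le_of_le_add hsub ?_)
  simpa only [Multiset.map_coe, Walk.edges_append, List.map_append, ← Multiset.coe_add,
    Multiset.map_add] using Multiset.map_le_map (f := w) hedges

theorem dPhi_le_phi_dPhi (hcont : Continuous fun q : ℝ≥0 × ℝ≥0 => Φ q.1 q.2)
    (hmono : ∀ a, Monotone (Φ a)) (hmono' : ∀ b, Monotone fun a => Φ a b)
    (hsub : PhiSubadditive Φ) {u v p : V} (hup : G.Reachable u p) (hpv : G.Reachable p v) :
    dPhi G Φ w u v ≤ Φ (dPhi G Φ w u p) (dPhi G Φ w p v) := by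
  refine le_apply₂_of_forall_gt hcont fun x y hx hy => ?_
  obtain ⟨P, -, hP⟩ := Reachable.exists_isPath_listPhi_lt hup hx
  obtain ⟨Q, -, hQ⟩ := Reachable.exists_isPath_listPhi_lt hpv hy
  calc dPhi G Φ w u v ≤ Φ (listPhi Φ (P.edges.map w)) (listPhi Φ (Q.edges.map w)) :=
        dPhi_le_of_append hsub P Q
    _ ≤ Φ x y := (hmono' _ hP.le).trans (hmono x hQ.le)

end DPhi

/-- for a connected weighted graph and a continuous triangle function `Φ`
satisfying the standing conditions, `d_Φ^w` satisfies the generalized triangle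
inequality, i.e. it is a `Φ`-pseudosemimetric on `V(G)`. -/
theorem stmt_5 {V : Type*} (G : SimpleGraph V) (hconn : G.Preconnected)
    (w : Sym2 V → ℝ≥0) (Φ : ℝ≥0 → ℝ≥0 → ℝ≥0) (hΦ : Standing Φ) :
    (∀ u v p : V, dPhi G Φ w u v ≤ Φ (dPhi G Φ w u p) (dPhi G Φ w p v)) ∧
    IsPseudoSemimetricWith Φ (dPhi G Φ w) := by
  obtain ⟨hcont, hcomm, hmono, hmono', -, hrot, hsub, -⟩ := hΦ
  have htri : ∀ u v p : V, dPhi G Φ w u v ≤ Φ (dPhi G Φ w u p) (dPhi G Φ w p v) :=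
    fun u v p => dPhi_le_phi_dPhi hcont hmono hmono' hsub (hconn u p) (hconn p v)
  refine ⟨htri, dPhi_comm hcomm hrot, dPhi_self, fun x y z => ?_⟩
  rw [dPhi_comm hcomm hrot y z]
  exact htri x y z
end

section
/- Let (G,w) be a weighted graph and Φ a continuous triangle function satisfying the standing conditions. If there exists a Φ-pseudosemimetric ρ on V(G) with ρ(u,v) = w({u,v}) for every edge {u,v} ∈ E(G), then w({u,v}) = d_Φ^w(u,v) for every edge {u,v} ∈ E(G). -/
open scoped NNReal
open SimpleGraph

lemma rho_le_walk {V : Type*} {G : SimpleGraph V} {w : Sym2 V → ℝ≥0}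
    {Φ : ℝ≥0 → ℝ≥0 → ℝ≥0} {ρ : V → V → ℝ≥0}
    (hsymm : ∀ x y, ρ x y = ρ y x) (hdiag : ∀ x, ρ x x = 0)
    (htri : ∀ x y z, ρ x y ≤ Φ (ρ x z) (ρ y z))
    (hmono : ∀ a, Monotone (Φ a))
    (hedge : ∀ u v, G.Adj u v → ρ u v = w s(u, v)) :
    ∀ {u v : V} (p : G.Walk u v), ρ u v ≤ listPhi Φ (p.edges.map w) := by
  intro u v p
  induction p with
  | nil => simp [hdiag, listPhi]
  | @cons u x v h p ih =>
    cases p with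
    | nil =>
      simp only [SimpleGraph.Walk.edges_cons, SimpleGraph.Walk.edges_nil,
        List.map_cons, List.map_nil, listPhi, PhiStar]
      exact le_of_eq (hedge _ _ h)
    | @cons x y v h2 q =>
      have key : ρ u v ≤ Φ (ρ u x) (ρ x v) := by
        have := htri u v x
        rwa [hsymm v x] at this
      have hx : ρ u x = w s(u, x) := hedge u x h
      calc ρ u v ≤ Φ (ρ u x) (ρ x v) := key
        _ ≤ Φ (w s(u, x)) (listPhi Φ (((SimpleGraph.Walk.cons h2 q).edges).map w)) := by
            rw [hx]; exact hmono _ ih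
        _ = listPhi Φ ((SimpleGraph.Walk.cons h (SimpleGraph.Walk.cons h2 q)).edges.map w) := by
            simp only [SimpleGraph.Walk.edges_cons, List.map_cons, listPhi, PhiStar]

/-- if `w` extends to a `Φ`-pseudosemimetric on `V(G)`, then
`w({u,v}) = d_Φ^w(u,v)` for every edge `{u,v}`. -/
theorem stmt_7 {V : Type*} (G : SimpleGraph V) (w : Sym2 V → ℝ≥0)
    (Φ : ℝ≥0 → ℝ≥0 → ℝ≥0) (hΦ : Standing Φ)
    (hext : ∃ ρ : V → V → ℝ≥0, IsPseudoSemimetricWith Φ ρ ∧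
      ∀ u v, G.Adj u v → ρ u v = w s(u, v)) :
    ∀ u v, G.Adj u v → w s(u, v) = dPhi G Φ w u v := by
  obtain ⟨ρ, ⟨hsymm, hdiag, htri⟩, hedge⟩ := hext
  obtain ⟨_, _, hmono, _, _, _, _, _⟩ := hΦ
  intro u v huv
  apply le_antisymm
  · apply le_csInf
    · exact ⟨w s(u, v), SimpleGraph.Walk.cons huv SimpleGraph.Walk.nil, by
        simp [SimpleGraph.Walk.isPath_def, huv.ne], by simp [listPhi, PhiStar]⟩
    · rintro x ⟨p, -, rfl⟩
      rw [← hedge u v huv]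
      exact rho_le_walk hsymm hdiag htri hmono hedge p
  · exact csInf_le (OrderBot.bddBelow _) ⟨SimpleGraph.Walk.cons huv SimpleGraph.Walk.nil, by
      simp [SimpleGraph.Walk.isPath_def, huv.ne], by simp [listPhi, PhiStar]⟩
end

section
/- Let (G,w) be a weighted graph. The weight w extends to a pseudoultrametric on V(G) (i.e., a symmetric function d with d(x,x)=0 satisfying d(x,y) ≤ max{d(x,z), d(z,y)} and d(u,v) = w({u,v}) on edges) if and only if every cycle C ⊆ G contains at least two distinct edges e₁, e₂ with w(e₁) = w(e₂) = max{w(e) : e ∈ E(C)}. -/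
/-!
If `d` is a pseudoultrametric extending `w`, the strong triangle inequality bounds `d x y` by the
heaviest edge of any `x`–`y` walk. Removing an edge `ab` from a cycle leaves an `a`–`b` walk, so
`w(ab) = d a b` is at most the weight of some other edge of the cycle: no cycle has a unique
heaviest edge.

Conversely, take for `d x y` the minimax distance: the infimum over `x`–`y` walks of the heaviest
edge weight. It is an extended pseudoultrametric, and on an edge `uv` it equals `w(uv)`, since a
lighter `u`–`v` walk would shorten to a path closing up with `uv` into a cycle whose unique
heaviest edge is `uv`. Distances between different components are infinite; they are replaced by
`max (α x) (α y)`, where `α x` is the distance from `x` to a chosen point of its component.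
-/

open scoped NNReal ENNReal
open SimpleGraph

structure IsPseudoUltrametric {V α : Type*} [LinearOrder α] [Zero α] (d : V → V → α) : Prop where
  symm : ∀ x y, d x y = d y x
  self_eq_zero : ∀ x, d x x = 0
  le_max : ∀ x y z, d x y ≤ max (d x z) (d z y)

namespace IsPseudoUltrametric

variable {V : Type*}

theorem toNNReal {D : V → V → ℝ≥0∞} (hD : IsPseudoUltrametric D) (hfin : ∀ x y, D x y ≠ ∞) :
    IsPseudoUltrametric fun x y => (D x y).toNNReal where
  symm x y := by rw [hD.symm]
  self_eq_zero x := by rw [hD.self_eq_zero, ENNReal.toNNReal_zero]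
  le_max x y z := by
    rw [← ENNReal.coe_le_coe, ENNReal.coe_max, ENNReal.coe_toNNReal (hfin _ _),
      ENNReal.coe_toNNReal (hfin _ _), ENNReal.coe_toNNReal (hfin _ _)]
    exact hD.le_max x y z

def finiteSetoid {ρ : V → V → ℝ≥0∞} (hρ : IsPseudoUltrametric ρ) : Setoid V where
  r x y := ρ x y ≠ ∞
  iseqv :=
    { refl x := by simp [hρ.self_eq_zero]
      symm h := by rwa [hρ.symm]
      trans {x y z} hxy hyz := ((hρ.le_max x z y).trans_lt (max_lt hxy.lt_top hyz.lt_top)).ne }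

theorem exists_nnreal_eq_of_ne_top {ρ : V → V → ℝ≥0∞} (hρ : IsPseudoUltrametric ρ) :
    ∃ d : V → V → ℝ≥0, IsPseudoUltrametric d ∧ ∀ x y, ρ x y ≠ ∞ → (d x y : ℝ≥0∞) = ρ x y := by
  let s := hρ.finiteSetoid
  let r : V → V := fun x => (Quotient.mk s x).out
  have hr : ∀ x y, ρ x y ≠ ∞ → r x = r y := fun x y h => congrArg Quotient.out (Quotient.sound h)
  let α : V → ℝ≥0∞ := fun x => ρ x (r x)
  have hα : ∀ x, α x ≠ ∞ := fun x => by
    simp only [α, hρ.symm x]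
    exact Quotient.mk_out (s := s) x
  have hα_le : ∀ x z, ρ x z ≠ ∞ → α x ≤ max (ρ x z) (α z) := fun x z h => by
    simpa only [α, hr x z h] using hρ.le_max x (r z) z
  have hρ_le : ∀ x y, ρ x y ≠ ∞ → ρ x y ≤ max (α x) (α y) := fun x y h => by
    simpa only [α, hr x y h, hρ.symm (r y) y] using hρ.le_max x y (r y)
  -- By `hρ_le`, the truncation only affects pairs at infinite distance.
  let D : V → V → ℝ≥0∞ := fun x y => min (ρ x y) (max (α x) (α y))
  have hD_fin : ∀ x y, D x y ≠ ∞ := fun x y =>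
    (min_le_right _ _).trans_lt (max_lt (hα x).lt_top (hα y).lt_top) |>.ne
  have hD : IsPseudoUltrametric D :=
    { symm x y := by simp only [D, hρ.symm x y, max_comm]
      self_eq_zero x := by simp only [D, hρ.self_eq_zero, zero_min]
      le_max x y z := by
        rcases min_choice (ρ x z) (max (α x) (α z)) with hxz | hxz <;>
          rcases min_choice (ρ z y) (max (α z) (α y)) with hzy | hzy <;>
          simp only [D, hxz, hzy]
        · exact (min_le_left _ _).trans (hρ.le_max x y z)
        · have hαx := hα_le x z (hxz ▸ hD_fin x z)
          exact (min_le_right _ _).trans (max_le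
            (hαx.trans (max_le_max le_rfl (le_max_left _ _)))
            (le_max_of_le_right (le_max_right _ _)))
        · have hαy := hα_le y z (hρ.symm z y ▸ hzy ▸ hD_fin z y)
          rw [hρ.symm y z] at hαy
          exact (min_le_right _ _).trans (max_le
            (le_max_of_le_left (le_max_left _ _))
            (hαy.trans (max_le (le_max_right _ _) (le_max_of_le_left (le_max_right _ _)))))
        · exact (min_le_right _ _).trans (max_le
            (le_max_of_le_left (le_max_left _ _)) (le_max_of_le_right (le_max_right _ _))) }
  refine ⟨_, hD.toNNReal hD_fin, fun x y h => ?_⟩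
  rw [ENNReal.coe_toNNReal (hD_fin x y)]
  exact min_eq_left (hρ_le x y h)

end IsPseudoUltrametric

namespace SimpleGraph

variable {V : Type*} {G : SimpleGraph V}

-- Inside the graph formed by the edges of `c`, the edge `ab` lies on a cycle, so is no bridge.
theorem Walk.IsCycle.exists_walk_not_mem_edges {u a b : V} {c : G.Walk u u} (hc : c.IsCycle)
    (he : s(a, b) ∈ c.edges) : ∃ p : G.Walk a b, s(a, b) ∉ p.edges ∧ p.edges ⊆ c.edges := by
  let H := fromEdgeSet {e | e ∈ c.edges}
  have hcH : ∀ e ∈ c.edges, e ∈ H.edgeSet := fun e he' =>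
    edgeSet_fromEdgeSet _ ▸ ⟨he', G.not_isDiag_of_mem_edgeSet (c.edges_subset_edgeSet he')⟩
  have hHG : H ≤ G := fun x y hxy => c.adj_of_mem_edges ((fromEdgeSet_adj _).mp hxy).1
  obtain ⟨-, hreach⟩ := adj_and_reachable_delete_edges_iff_exists_cycle.mpr
    ⟨u, c.transfer H hcH, hc.transfer hcH, by rwa [Walk.edges_transfer]⟩
  obtain ⟨p, hp⟩ := reachable_deleteEdges_iff_exists_walk.mp hreach
  refine ⟨p.mapLe hHG, by rwa [Walk.edges_mapLe_eq_edges], fun e he' => ?_⟩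
  rw [Walk.edges_mapLe_eq_edges] at he'
  exact ((edgeSet_fromEdgeSet _).subset (p.edges_subset_edgeSet he')).1

def NoStrictHeaviestCycleEdge (G : SimpleGraph V) (w : Sym2 V → ℝ≥0) : Prop :=
  ∀ ⦃u : V⦄ (c : G.Walk u u), c.IsCycle → ∀ e ∈ c.edges, ∃ e' ∈ c.edges, e' ≠ e ∧ w e ≤ w e'

theorem noStrictHeaviestCycleEdge_iff {w : Sym2 V → ℝ≥0} :
    NoStrictHeaviestCycleEdge G w ↔ ∀ (u : V) (c : G.Walk u u), c.IsCycle →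
      ∃ e₁ ∈ c.edges, ∃ e₂ ∈ c.edges, e₁ ≠ e₂ ∧ w e₁ = w e₂ ∧ ∀ e ∈ c.edges, w e ≤ w e₁ := by
  classical
  constructor
  · intro h u c hc
    have hne : c.edges.toFinset.Nonempty := by
      simpa [List.toFinset_nonempty_iff, Walk.edges_eq_nil] using hc.not_nil
    obtain ⟨e₁, he₁, hmax⟩ := Finset.exists_max_image _ w hne
    rw [List.mem_toFinset] at he₁
    obtain ⟨e₂, he₂, hne₂, hle⟩ := h c hc e₁ he₁
    exact ⟨e₁, he₁, e₂, he₂, hne₂.symm, hle.antisymm (hmax e₂ (List.mem_toFinset.mpr he₂)),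
      fun e he => hmax e (List.mem_toFinset.mpr he)⟩
  · intro h u c hc e he
    obtain ⟨e₁, he₁, e₂, he₂, hne, heq, hmax⟩ := h u c hc
    by_cases h₁ : e₁ = e
    · exact ⟨e₂, he₂, h₁ ▸ hne.symm, heq ▸ hmax e he⟩
    · exact ⟨e₁, he₁, h₁, hmax e he⟩

variable [DecidableEq V]

def Walk.maxWeight {u v : V} (w : Sym2 V → ℝ≥0) (p : G.Walk u v) : ℝ≥0 :=
  p.edges.toFinset.sup w

namespace Walk

variable {w : Sym2 V → ℝ≥0} {u v x : V}

@[simp]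
theorem maxWeight_nil : (nil : G.Walk u u).maxWeight w = 0 := rfl

@[simp]
theorem maxWeight_cons (h : G.Adj u v) (p : G.Walk v x) :
    (cons h p).maxWeight w = max (w s(u, v)) (p.maxWeight w) := by
  simp [maxWeight, Finset.sup_insert]

theorem maxWeight_append (p : G.Walk u v) (q : G.Walk v x) :
    (p.append q).maxWeight w = max (p.maxWeight w) (q.maxWeight w) := by
  simp [maxWeight, List.toFinset_append, Finset.sup_union]

@[simp]
theorem maxWeight_reverse (p : G.Walk u v) : p.reverse.maxWeight w = p.maxWeight w := by
  simp [maxWeight]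

theorem le_maxWeight {p : G.Walk u v} {e : Sym2 V} (he : e ∈ p.edges) : w e ≤ p.maxWeight w :=
  Finset.le_sup (List.mem_toFinset.mpr he)

theorem exists_mem_edges_maxWeight_eq (huv : u ≠ v) (p : G.Walk u v) :
    ∃ e ∈ p.edges, p.maxWeight w = w e := by
  have hne : p.edges.toFinset.Nonempty := by
    simpa [List.toFinset_nonempty_iff, edges_eq_nil] using not_nil_of_ne huv
  obtain ⟨e, he, heq⟩ := Finset.exists_mem_eq_sup _ hne w
  exact ⟨e, List.mem_toFinset.mp he, heq⟩

end Walk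

variable {w : Sym2 V → ℝ≥0}

theorem NoStrictHeaviestCycleEdge.le_maxWeight (hG : NoStrictHeaviestCycleEdge G w) {u v : V}
    (h : G.Adj u v) (p : G.Walk u v) : w s(u, v) ≤ p.maxWeight w := by
  by_contra! hlt
  have hq : ∀ e ∈ (p.toPath : G.Walk u v).edges, w e < w s(u, v) := fun e he =>
    (Walk.le_maxWeight (p.edges_toPath_subset_edges he)).trans_lt hlt
  have hc : (Walk.cons h.symm (p.toPath : G.Walk u v)).IsCycle := by
    refine Path.cons_isCycle _ _ fun he => (hq _ he).ne ?_
    rw [Sym2.eq_swap]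
  obtain ⟨e', he', hne, hle⟩ := hG _ hc s(v, u) (by simp)
  rw [Walk.edges_cons, List.mem_cons] at he'
  rw [Sym2.eq_swap] at hle
  exact (hle.trans_lt (hq e' (he'.resolve_left hne))).false

noncomputable def minimaxDist (G : SimpleGraph V) (w : Sym2 V → ℝ≥0) (x y : V) : ℝ≥0∞ :=
  ⨅ p : G.Walk x y, (p.maxWeight w : ℝ≥0∞)

theorem minimaxDist_le {x y : V} (p : G.Walk x y) : minimaxDist G w x y ≤ p.maxWeight w :=
  iInf_le _ p

theorem isPseudoUltrametric_minimaxDist : IsPseudoUltrametric (minimaxDist G w) where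
  symm x y := le_antisymm
    (le_iInf fun p => (minimaxDist_le p.reverse).trans_eq (by rw [Walk.maxWeight_reverse]))
    (le_iInf fun p => (minimaxDist_le p.reverse).trans_eq (by rw [Walk.maxWeight_reverse]))
  self_eq_zero x := le_antisymm ((minimaxDist_le Walk.nil).trans_eq (by simp)) bot_le
  le_max x y z := by
    calc minimaxDist G w x y
        ≤ ⨅ (p : G.Walk x z) (q : G.Walk z y), max (p.maxWeight w : ℝ≥0∞) (q.maxWeight w) :=
          le_iInf₂ fun p q => (minimaxDist_le (p.append q)).trans_eq
            (by rw [Walk.maxWeight_append, ENNReal.coe_max])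
      _ = max (minimaxDist G w x z) (minimaxDist G w z y) := by
          simp only [minimaxDist, iInf_sup_eq, sup_iInf_eq]
          exact iInf_comm

theorem NoStrictHeaviestCycleEdge.minimaxDist_eq (hG : NoStrictHeaviestCycleEdge G w) {u v : V}
    (h : G.Adj u v) : minimaxDist G w u v = w s(u, v) :=
  le_antisymm ((minimaxDist_le (Walk.cons h Walk.nil)).trans_eq (by simp))
    (le_iInf fun p => ENNReal.coe_le_coe.mpr (hG.le_maxWeight h p))

end SimpleGraph

namespace IsPseudoUltrametric

variable {V : Type*} [DecidableEq V] {G : SimpleGraph V} {w : Sym2 V → ℝ≥0} {d : V → V → ℝ≥0}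

theorem le_maxWeight (hd : IsPseudoUltrametric d) (hdw : ∀ u v, G.Adj u v → d u v = w s(u, v))
    {x y : V} (p : G.Walk x y) : d x y ≤ p.maxWeight w := by
  induction p with
  | nil => simp [hd.self_eq_zero]
  | @cons a b c h p ih =>
    calc d a c ≤ max (d a b) (d b c) := hd.le_max a c b
      _ ≤ max (w s(a, b)) (p.maxWeight w) := max_le_max (hdw a b h).le ih
      _ = (Walk.cons h p).maxWeight w := (Walk.maxWeight_cons h p).symm

theorem noStrictHeaviestCycleEdge (hd : IsPseudoUltrametric d)
    (hdw : ∀ u v, G.Adj u v → d u v = w s(u, v)) : G.NoStrictHeaviestCycleEdge w := by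
  intro u c hc e he
  induction e with | h a b =>
  obtain ⟨p, hp, hpc⟩ := hc.exists_walk_not_mem_edges he
  obtain ⟨e', he', hmax⟩ := p.exists_mem_edges_maxWeight_eq (w := w) (c.adj_of_mem_edges he).ne
  refine ⟨e', hpc he', fun h => hp (h ▸ he'), ?_⟩
  calc w s(a, b) = d a b := (hdw a b (c.adj_of_mem_edges he)).symm
    _ ≤ p.maxWeight w := hd.le_maxWeight hdw p
    _ = w e' := hmax

end IsPseudoUltrametric

/-- `w` extends to a pseudoultrametric on `V(G)` iff every cycle of `G`
contains at least two distinct edges of maximal weight. -/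
theorem stmt_11 {V : Type*} (G : SimpleGraph V) (w : Sym2 V → ℝ≥0) :
    (∃ d : V → V → ℝ≥0,
        (∀ x y, d x y = d y x) ∧ (∀ x, d x x = 0) ∧
        (∀ x y z, d x y ≤ max (d x z) (d z y)) ∧
        ∀ u v, G.Adj u v → d u v = w s(u, v)) ↔
    (∀ (u : V) (c : G.Walk u u), c.IsCycle →
      ∃ e₁ ∈ c.edges, ∃ e₂ ∈ c.edges, e₁ ≠ e₂ ∧ w e₁ = w e₂ ∧
        ∀ e ∈ c.edges, w e ≤ w e₁) := by
  classical
  rw [← noStrictHeaviestCycleEdge_iff]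
  constructor
  · rintro ⟨d, hsymm, hself, hmax, hdw⟩
    exact IsPseudoUltrametric.noStrictHeaviestCycleEdge ⟨hsymm, hself, hmax⟩ hdw
  · intro hG
    obtain ⟨d, hd, hdρ⟩ :=
      (isPseudoUltrametric_minimaxDist (G := G) (w := w)).exists_nnreal_eq_of_ne_top
    refine ⟨d, hd.symm, hd.self_eq_zero, hd.le_max, fun u v h => ?_⟩
    have hρ := hG.minimaxDist_eq h
    exact_mod_cast (hdρ u v (by simp [hρ])).trans hρ
end

section
/- Let (G,w) be a weighted graph and φ: [0,∞) → [0,∞) a homeomorphism fixing 0. The weight w extends to a Φ-pseudosemimetric on V(G) with Φ(x,y) = φ⁻¹(φ(x) + φ(y)) if and only if for every cycle C ⊆ G and every edge e ∈ E(C), w(e) ≤ φ⁻¹(∑_{ẽ ∈ E(C), ẽ ≠ e} φ(w(ẽ))). -/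
/-!
Put `f := φ ∘ w`. Applying `φ` turns the `Φ`-triangle inequality for `d` into the ordinary
triangle inequality for `φ ∘ d`, and conversely `ψ ∘ D` satisfies the `Φ`-triangle inequality
whenever `D` is a pseudometric. So the theorem says that `f` extends to a pseudometric iff no edge
is heavier than the rest of a cycle through it. Necessity follows by summing the triangle
inequality along the cycle. For sufficiency take the shortest-walk distance for the weights `f`:
the cycle condition, applied to the path underlying any walk, shows that an edge is a shortest
walk between its ends. This distance is infinite between components; it is made finite by
routing such pairs through a fixed anchor vertex of each component.
-/

open scoped NNReal ENNReal
open SimpleGraph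

structure IsPseudoMetric {α M : Type*} [Add M] [Zero M] [LE M] (d : α → α → M) : Prop where
  symm : ∀ x y, d x y = d y x
  self : ∀ x, d x x = 0
  triangle : ∀ x y z, d x y ≤ d x z + d z y

namespace IsPseudoMetric

variable {α : Type*}

theorem toNNReal {E : α → α → ℝ≥0∞} (hE : IsPseudoMetric E) (hfin : ∀ x y, E x y ≠ ⊤) :
    IsPseudoMetric fun x y => (E x y).toNNReal where
  symm x y := by rw [hE.symm]
  self x := by rw [hE.self, ENNReal.toNNReal_zero]
  triangle x y z := by
    rw [← ENNReal.toNNReal_add (hfin x z) (hfin z y)]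
    exact ENNReal.toNNReal_mono (ENNReal.add_ne_top.2 ⟨hfin x z, hfin z y⟩) (hE.triangle x y z)

section Finitize

variable {E : α → α → ℝ≥0∞} (hE : IsPseudoMetric E)

def finiteSetoid : Setoid α where
  r x y := E x y ≠ ⊤
  iseqv :=
    { refl x := by simp [hE.self]
      symm h := by rwa [hE.symm]
      trans hxy hyz := ne_top_of_le_ne_top (ENNReal.add_ne_top.2 ⟨hxy, hyz⟩) (hE.triangle _ _ _) }

noncomputable def anchor (x : α) : α :=
  (Quotient.mk hE.finiteSetoid x).out

theorem ne_top_anchor (x : α) : E x (hE.anchor x) ≠ ⊤ := by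
  rw [hE.symm]
  exact Quotient.mk_out (s := hE.finiteSetoid) x

theorem anchor_eq_anchor {x y : α} (h : E x y ≠ ⊤) : hE.anchor x = hE.anchor y :=
  congrArg Quotient.out (Quotient.sound (s := hE.finiteSetoid) h)

noncomputable def finitize (x y : α) : ℝ≥0∞ :=
  if E x y = ⊤ then E x (hE.anchor x) + E y (hE.anchor y) else E x y

theorem finitize_le (x y : α) : hE.finitize x y ≤ E x y := by
  unfold finitize
  split_ifs with h <;> simp [h]

theorem finitize_le_anchor_add_anchor (x y : α) :
    hE.finitize x y ≤ E x (hE.anchor x) + E y (hE.anchor y) := by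
  unfold finitize
  split_ifs with h
  · rfl
  · calc E x y ≤ E x (hE.anchor x) + E (hE.anchor x) y := hE.triangle _ _ _
      _ = E x (hE.anchor x) + E y (hE.anchor y) := by rw [hE.symm _ y, hE.anchor_eq_anchor h]

theorem dist_anchor_le {x z : α} (h : E x z ≠ ⊤) :
    E x (hE.anchor x) ≤ E x z + E z (hE.anchor z) := by
  rw [hE.anchor_eq_anchor h]
  exact hE.triangle _ _ _

theorem isPseudoMetric_finitize : IsPseudoMetric hE.finitize where
  symm x y := by
    unfold finitize
    rw [hE.symm y x, add_comm (E y _)]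
  self x := by simp [finitize, hE.self]
  triangle x y z := by
    by_cases h₁ : E x z = ⊤ <;> by_cases h₂ : E z y = ⊤
    · grw [hE.finitize_le_anchor_add_anchor x y]
      simp only [finitize, if_pos h₁, if_pos h₂]
      exact add_le_add le_self_add le_add_self
    · grw [hE.finitize_le_anchor_add_anchor x y,
        hE.dist_anchor_le (by rwa [hE.symm] : E y z ≠ ⊤)]
      simp only [finitize, if_pos h₁, if_neg h₂, hE.symm y z]
      exact le_of_eq (by ring)
    · grw [hE.finitize_le_anchor_add_anchor x y, hE.dist_anchor_le h₁]
      simp only [finitize, if_neg h₁, if_pos h₂, add_assoc, le_refl]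
    · grw [hE.finitize_le x y, hE.triangle x y z]
      simp only [finitize, if_neg h₁, if_neg h₂, le_refl]

theorem finitize_ne_top (x y : α) : hE.finitize x y ≠ ⊤ :=
  ne_top_of_le_ne_top (ENNReal.add_ne_top.2 ⟨hE.ne_top_anchor x, hE.ne_top_anchor y⟩)
    (hE.finitize_le_anchor_add_anchor x y)

theorem finitize_of_ne_top {x y : α} (h : E x y ≠ ⊤) : hE.finitize x y = E x y := if_neg h

end Finitize

theorem exists_nnreal_eq_of_ne_top {E : α → α → ℝ≥0∞} (hE : IsPseudoMetric E) :
    ∃ D : α → α → ℝ≥0, IsPseudoMetric D ∧ ∀ x y, E x y ≠ ⊤ → (D x y : ℝ≥0∞) = E x y :=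
  ⟨_, hE.isPseudoMetric_finitize.toNNReal hE.finitize_ne_top, fun x y h => by
    rw [ENNReal.coe_toNNReal (hE.finitize_ne_top x y), hE.finitize_of_ne_top h]⟩

end IsPseudoMetric

namespace SimpleGraph

variable {V : Type*} {G : SimpleGraph V}

theorem Walk.le_sum_edges {M : Type*} [AddCommMonoid M] [PartialOrder M] [IsOrderedAddMonoid M]
    {D : V → V → M} {f : Sym2 V → M} (h_self : ∀ x, D x x = 0)
    (h_tri : ∀ x y z, D x y ≤ D x z + D z y) (h_adj : ∀ u v, G.Adj u v → D u v = f s(u, v))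
    {x y : V} (p : G.Walk x y) : D x y ≤ (p.edges.map f).sum := by
  induction p with
  | nil => simp [h_self]
  | @cons u v y huv q ih =>
    calc D u y ≤ D u v + D v y := h_tri u y v
      _ ≤ f s(u, v) + (q.edges.map f).sum := by rw [h_adj u v huv]; gcongr
      _ = ((Walk.cons huv q).edges.map f).sum := by simp

def CycleInequality {M : Type*} [AddCommMonoid M] [LE M] (G : SimpleGraph V)
    (f : Sym2 V → M) : Prop :=
  ∀ (a b : V) (h : G.Adj a b) (p : G.Walk b a),
    (Walk.cons h p).IsCycle → f s(a, b) ≤ (p.edges.map f).sum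

theorem CycleInequality.le_sum_edges {M : Type*} [AddCommMonoid M] [PartialOrder M]
    [IsOrderedAddMonoid M] [CanonicallyOrderedAdd M] {f : Sym2 V → M}
    (hcyc : G.CycleInequality f) {a b : V} (h : G.Adj a b) (p : G.Walk b a) :
    f s(a, b) ≤ (p.edges.map f).sum := by
  classical
  refine le_trans ?_ ((p.edges_bypass_sublist_edges.map f).sum_le_sum fun _ _ => zero_le)
  by_cases he : s(a, b) ∈ p.bypass.edges
  · exact List.le_sum_of_mem (List.mem_map_of_mem he)
  · exact hcyc a b h p.bypass ((Walk.cons_isCycle_iff _ _).2 ⟨p.bypass_isPath, he⟩)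

noncomputable def weightedEDist (G : SimpleGraph V) (f : Sym2 V → ℝ≥0) (x y : V) : ℝ≥0∞ :=
  ⨅ p : G.Walk x y, ((p.edges.map f).sum : ℝ≥0∞)

variable (f : Sym2 V → ℝ≥0)

theorem weightedEDist_le {x y : V} (p : G.Walk x y) :
    G.weightedEDist f x y ≤ (p.edges.map f).sum :=
  iInf_le _ p

theorem isPseudoMetric_weightedEDist : IsPseudoMetric (G.weightedEDist f) where
  symm x y := le_antisymm (le_iInf fun p => by simpa using weightedEDist_le f p.reverse)
    (le_iInf fun p => by simpa using weightedEDist_le f p.reverse)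
  self x := nonpos_iff_eq_zero.1 (by simpa using weightedEDist_le f (Walk.nil : G.Walk x x))
  triangle x y z := by
    calc G.weightedEDist f x y
        ≤ ⨅ (p : G.Walk x z) (q : G.Walk z y),
            ((p.edges.map f).sum + (q.edges.map f).sum : ℝ≥0∞) :=
          le_iInf₂ fun p q => by simpa using weightedEDist_le f (p.append q)
      _ = G.weightedEDist f x z + G.weightedEDist f z y := by
          simp only [weightedEDist, ENNReal.iInf_add, ENNReal.add_iInf]
          exact iInf_comm

theorem weightedEDist_of_adj (hcyc : G.CycleInequality f) {u v : V} (h : G.Adj u v) :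
    G.weightedEDist f u v = f s(u, v) := by
  refine le_antisymm (by simpa using weightedEDist_le f (Walk.cons h Walk.nil))
    (le_iInf fun p => ?_)
  rw [Sym2.eq_swap]
  exact_mod_cast hcyc.le_sum_edges h.symm p

theorem exists_isPseudoMetric_eq_of_adj (hcyc : G.CycleInequality f) :
    ∃ D : V → V → ℝ≥0, IsPseudoMetric D ∧ ∀ u v, G.Adj u v → D u v = f s(u, v) := by
  obtain ⟨D, hD, hDE⟩ := (isPseudoMetric_weightedEDist (G := G) f).exists_nnreal_eq_of_ne_top
  refine ⟨D, hD, fun u v h => ?_⟩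
  have hE := weightedEDist_of_adj f hcyc h
  exact_mod_cast (hDE u v (by simp [hE])).trans hE

end SimpleGraph

theorem stmt_12_general {V : Type*} (G : SimpleGraph V) (w : Sym2 V → ℝ≥0)
    (φ ψ : ℝ≥0 → ℝ≥0) (hm : StrictMono φ)
    (h0 : φ 0 = 0) (hinv1 : ∀ y, φ (ψ y) = y) (hinv2 : ∀ x, ψ (φ x) = x) :
    (∃ d : V → V → ℝ≥0,
        (∀ x y, d x y = d y x) ∧ (∀ x, d x x = 0) ∧
        (∀ x y z, d x y ≤ ψ (φ (d x z) + φ (d y z))) ∧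
        ∀ u v, G.Adj u v → d u v = w s(u, v)) ↔
    (∀ (a b : V) (h : G.Adj a b) (p : G.Walk b a),
        (SimpleGraph.Walk.cons h p).IsCycle →
        w s(a, b) ≤ ψ ((p.edges.map fun e => φ (w e)).sum)) := by
  have hψ : Monotone ψ := fun a b hab => hm.le_iff_le.1 (by rwa [hinv1, hinv1])
  constructor
  · rintro ⟨d, hsymm, hself, htri, hadj⟩ a b h p -
    have hφtri (x y z : V) : φ (d x y) ≤ φ (d x z) + φ (d z y) := by
      simpa [hinv1, hsymm z y] using hm.monotone (htri x y z)
    have hwalk := p.le_sum_edges (D := fun x y => φ (d x y)) (f := fun e => φ (w e))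
      (by simp [hself, h0]) hφtri fun u v huv => congrArg φ (hadj u v huv)
    rw [hsymm, hadj a b h] at hwalk
    simpa [hinv2] using hψ hwalk
  · intro hcyc
    obtain ⟨D, hD, hDadj⟩ := exists_isPseudoMetric_eq_of_adj (fun e => φ (w e))
      fun a b h p hp => by simpa [hinv1] using hm.monotone (hcyc a b h p hp)
    refine ⟨fun x y => ψ (D x y), fun x y => congrArg ψ (hD.symm x y), fun x => ?_,
      fun x y z => ?_, fun u v h => by simp [hDadj u v h, hinv2]⟩
    · simpa [hD.self, h0] using hinv2 0
    · simpa [hinv1, hD.symm y z] using hψ (hD.triangle x y z)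

/-- for a homeomorphism `φ` of `[0,∞)` fixing `0` (with inverse `ψ`) and
`Φ(x,y) = ψ(φ x + φ y)`, the weight `w` extends to a `Φ`-pseudosemimetric on `V(G)` iff
for every cycle `C` (an edge `{a,b}` plus a walk `p : b → a` with `Walk.cons h p` a cycle)
we have `w({a,b}) ≤ ψ(∑_{ẽ ∈ C∖{a,b}} φ(w(ẽ)))`. -/
theorem stmt_12 {V : Type*} (G : SimpleGraph V) (w : Sym2 V → ℝ≥0)
    (φ ψ : ℝ≥0 → ℝ≥0) (hc : Continuous φ) (hm : StrictMono φ)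
    (h0 : φ 0 = 0) (hinv1 : ∀ y, φ (ψ y) = y) (hinv2 : ∀ x, ψ (φ x) = x) :
    (∃ d : V → V → ℝ≥0,
        (∀ x y, d x y = d y x) ∧ (∀ x, d x x = 0) ∧
        (∀ x y z, d x y ≤ ψ (φ (d x z) + φ (d y z))) ∧
        ∀ u v, G.Adj u v → d u v = w s(u, v)) ↔
    (∀ (a b : V) (h : G.Adj a b) (p : G.Walk b a),
        (SimpleGraph.Walk.cons h p).IsCycle →
        w s(a, b) ≤ ψ ((p.edges.map fun e => φ (w e)).sum)) :=
  stmt_12_general G w φ ψ hm h0 hinv1 hinv2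
end

section
/- Let (G,w) be a weighted graph. The weight w extends to a pseudomultiplicative metric on V(G) (a symmetric function d: V×V → [1,∞) with d(x,x)=1 and d(x,z) ≤ d(x,y)·d(y,z), agreeing with w on edges) if and only if w(e) ≥ 1 for every edge e ∈ E(G) and for every cycle C ⊆ G and every edge e ∈ E(C), w(e) ≤ ∏_{ẽ ∈ E(C), ẽ ≠ e} w(ẽ). -/
open scoped NNReal
open SimpleGraph

/-!
Necessity: the triangle inequality bounds `d` between the ends of any walk by the product of
the weights along it; applied to the path `C - e` this is the cycle condition.

Sufficiency: take for `d(x, y)` the least product of weights along a walk from `x` to `y`. The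
cycle condition makes it agree with `w` on edges, since a shortest detour of an edge `e` either
uses `e` or closes a cycle with it. Points of different components are put at distance
`h(x) · h(y)`, where `h(x)` is the distance from `x` to a chosen base point of its component.
-/

structure IsPseudomultiplicativeMetric {X : Type*} (d : X → X → ℝ≥0) : Prop where
  one_le : ∀ x y, 1 ≤ d x y
  symm : ∀ x y, d x y = d y x
  self : ∀ x, d x x = 1
  le_mul : ∀ x y z, d x z ≤ d x y * d y z

namespace Setoid

variable {X : Type*} (s : Setoid X) (D : X → X → ℝ≥0)

noncomputable def rootDist (x : X) : ℝ≥0 := D x (Quotient.mk s x).out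

open scoped Classical in
noncomputable def glueDist (x y : X) : ℝ≥0 :=
  if s x y then D x y else s.rootDist D x * s.rootDist D y

variable {s D}

lemma rel_out_mk (x : X) : s x (Quotient.mk s x).out := s.symm (Quotient.mk_out x)

lemma out_mk_eq_of_rel {x y : X} (h : s x y) : (Quotient.mk s y).out = (Quotient.mk s x).out := by
  rw [Quotient.sound (s.symm h)]

lemma one_le_rootDist (hone : ∀ x y, s x y → 1 ≤ D x y) (x : X) : 1 ≤ s.rootDist D x :=
  hone _ _ (rel_out_mk x)

lemma glueDist_of_rel {x y : X} (h : s x y) : s.glueDist D x y = D x y := by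
  classical exact if_pos h

lemma glueDist_of_not_rel {x y : X} (h : ¬ s x y) :
    s.glueDist D x y = s.rootDist D x * s.rootDist D y := by
  classical exact if_neg h

lemma glueDist_comm (hsymm : ∀ x y, s x y → D x y = D y x) (x y : X) :
    s.glueDist D x y = s.glueDist D y x := by
  by_cases h : s x y
  · rw [glueDist_of_rel h, glueDist_of_rel (s.symm h), hsymm x y h]
  · rw [glueDist_of_not_rel h, glueDist_of_not_rel (mt s.symm h), mul_comm]

lemma glueDist_le_rootDist_mul (hsymm : ∀ x y, s x y → D x y = D y x)
    (hmul : ∀ x y z, s x y → s y z → D x z ≤ D x y * D y z) (x z : X) :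
    s.glueDist D x z ≤ s.rootDist D x * s.rootDist D z := by
  by_cases hxz : s x z
  · rw [glueDist_of_rel hxz, rootDist, rootDist, out_mk_eq_of_rel hxz,
      hsymm _ _ (s.trans (s.symm hxz) (rel_out_mk x))]
    exact hmul _ _ _ (rel_out_mk x) (s.trans (s.symm (rel_out_mk x)) hxz)
  · exact (glueDist_of_not_rel hxz).le

lemma rootDist_le_glueDist_mul (hone : ∀ x y, s x y → 1 ≤ D x y)
    (hmul : ∀ x y z, s x y → s y z → D x z ≤ D x y * D y z) (x y : X) :
    s.rootDist D x ≤ s.glueDist D x y * s.rootDist D y := by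
  by_cases hxy : s x y
  · rw [glueDist_of_rel hxy, rootDist, rootDist, out_mk_eq_of_rel hxy]
    exact hmul _ _ _ hxy (s.trans (s.symm hxy) (rel_out_mk x))
  · rw [glueDist_of_not_rel hxy, mul_assoc]
    exact le_mul_of_one_le_right' (one_le_mul (one_le_rootDist hone y) (one_le_rootDist hone y))

theorem isPseudomultiplicativeMetric_glueDist (hone : ∀ x y, s x y → 1 ≤ D x y)
    (hsymm : ∀ x y, s x y → D x y = D y x) (hself : ∀ x, D x x = 1)
    (hmul : ∀ x y z, s x y → s y z → D x z ≤ D x y * D y z) :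
    IsPseudomultiplicativeMetric (s.glueDist D) where
  one_le x y := by
    by_cases h : s x y
    · exact (glueDist_of_rel h).symm ▸ hone x y h
    · exact (glueDist_of_not_rel h).symm ▸
        one_le_mul (one_le_rootDist hone x) (one_le_rootDist hone y)
  symm := glueDist_comm hsymm
  self x := (glueDist_of_rel (s.refl x)).trans (hself x)
  le_mul x y z := by
    by_cases hxy : s x y
    · by_cases hyz : s y z
      · rw [glueDist_of_rel hxy, glueDist_of_rel hyz, glueDist_of_rel (s.trans hxy hyz)]
        exact hmul x y z hxy hyz
      · calc s.glueDist D x z ≤ s.rootDist D x * s.rootDist D z :=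
              glueDist_le_rootDist_mul hsymm hmul x z
          _ ≤ s.glueDist D x y * s.rootDist D y * s.rootDist D z := by
              gcongr; exact rootDist_le_glueDist_mul hone hmul x y
          _ = s.glueDist D x y * s.glueDist D y z := by
              rw [glueDist_of_not_rel hyz, mul_assoc]
    · calc s.glueDist D x z ≤ s.rootDist D x * s.rootDist D z :=
            glueDist_le_rootDist_mul hsymm hmul x z
        _ ≤ s.rootDist D x * (s.glueDist D y z * s.rootDist D y) := by
            gcongr
            rw [glueDist_comm hsymm y z]
            exact rootDist_le_glueDist_mul hone hmul z y
        _ = s.glueDist D x y * s.glueDist D y z := by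
            rw [glueDist_of_not_rel hxy]; ring

end Setoid

namespace SimpleGraph

variable {V : Type*} {G : SimpleGraph V}

namespace Walk

variable (w : Sym2 V → ℝ≥0)

noncomputable def mulWeight {x y : V} (p : G.Walk x y) : ℝ≥0 := (p.edges.map w).prod

@[simp]
lemma mulWeight_nil {x : V} : (nil : G.Walk x x).mulWeight w = 1 := rfl

@[simp]
lemma mulWeight_cons {x y z : V} (h : G.Adj x y) (p : G.Walk y z) :
    (cons h p).mulWeight w = w s(x, y) * p.mulWeight w := rfl

lemma mulWeight_append {x y z : V} (p : G.Walk x y) (q : G.Walk y z) :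
    (p.append q).mulWeight w = p.mulWeight w * q.mulWeight w := by
  simp [mulWeight, edges_append]

lemma mulWeight_reverse {x y : V} (p : G.Walk x y) : p.reverse.mulWeight w = p.mulWeight w := by
  simp [mulWeight, edges_reverse, List.prod_reverse]

variable {w}

lemma one_le_weight_of_mem_edges (h1 : ∀ u v, G.Adj u v → 1 ≤ w s(u, v)) {x y : V}
    (p : G.Walk x y) : ∀ r ∈ p.edges.map w, 1 ≤ r := by
  simp only [List.mem_map, forall_exists_index, and_imp, forall_apply_eq_imp_iff₂]
  intro e he
  induction e using Sym2.ind with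
  | _ u v => exact h1 u v (p.adj_of_mem_edges he)

lemma one_le_mulWeight (h1 : ∀ u v, G.Adj u v → 1 ≤ w s(u, v)) {x y : V} (p : G.Walk x y) :
    1 ≤ p.mulWeight w :=
  List.one_le_prod_of_one_le (one_le_weight_of_mem_edges h1 p)

lemma le_mulWeight_of_mem_edges (h1 : ∀ u v, G.Adj u v → 1 ≤ w s(u, v)) {x y : V}
    (p : G.Walk x y) {e : Sym2 V} (he : e ∈ p.edges) : w e ≤ p.mulWeight w :=
  List.single_le_prod (one_le_weight_of_mem_edges h1 p) _ (List.mem_map_of_mem he)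

lemma mulWeight_bypass_le [DecidableEq V] (h1 : ∀ u v, G.Adj u v → 1 ≤ w s(u, v)) {x y : V}
    (p : G.Walk x y) : p.bypass.mulWeight w ≤ p.mulWeight w := by
  obtain ⟨l, hperm, hsub⟩ :=
    List.subperm_of_subset p.bypass_isPath.edges_nodup p.edges_bypass_subset_edges
  rw [mulWeight, ← (hperm.map w).prod_eq]
  exact (hsub.map w).prod_le_prod' (one_le_weight_of_mem_edges h1 p)

end Walk

/-- Between different components this is the empty infimum `0`. -/
noncomputable def mulDist (G : SimpleGraph V) (w : Sym2 V → ℝ≥0) (x y : V) : ℝ≥0 :=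
  ⨅ p : G.Walk x y, p.mulWeight w

variable {w : Sym2 V → ℝ≥0}

lemma mulDist_le_mulWeight {x y : V} (p : G.Walk x y) : G.mulDist w x y ≤ p.mulWeight w :=
  ciInf_le (OrderBot.bddBelow _) p

lemma le_mulDist {x y : V} (hxy : G.Reachable x y) {r : ℝ≥0}
    (h : ∀ p : G.Walk x y, r ≤ p.mulWeight w) : r ≤ G.mulDist w x y :=
  have : Nonempty (G.Walk x y) := hxy
  le_ciInf h

lemma one_le_mulDist (h1 : ∀ u v, G.Adj u v → 1 ≤ w s(u, v)) {x y : V} (hxy : G.Reachable x y) :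
    1 ≤ G.mulDist w x y :=
  le_mulDist hxy (Walk.one_le_mulWeight h1)

lemma mulDist_comm (x y : V) : G.mulDist w x y = G.mulDist w y x := by
  rw [mulDist, ← Walk.reverse_surjective.iInf_comp]
  simp only [Walk.mulWeight_reverse]
  rfl

lemma mulDist_self (h1 : ∀ u v, G.Adj u v → 1 ≤ w s(u, v)) (x : V) : G.mulDist w x x = 1 :=
  le_antisymm (mulDist_le_mulWeight .nil) (one_le_mulDist h1 (.refl x))

lemma mulDist_le_mul {x y z : V} (hxy : G.Reachable x y) (hyz : G.Reachable y z) :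
    G.mulDist w x z ≤ G.mulDist w x y * G.mulDist w y z := by
  have : Nonempty (G.Walk x y) := hxy
  have : Nonempty (G.Walk y z) := hyz
  calc G.mulDist w x z ≤ ⨅ (p : G.Walk x y) (q : G.Walk y z), p.mulWeight w * q.mulWeight w :=
        le_ciInf fun p => le_ciInf fun q =>
          p.mulWeight_append w q ▸ mulDist_le_mulWeight (p.append q)
    _ = G.mulDist w x y * G.mulDist w y z := by
        rw [mulDist, mulDist, NNReal.iInf_mul]
        simp_rw [NNReal.mul_iInf]

/-- After `bypass`, a detour of the edge either contains it or closes a cycle with it. -/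
lemma mulDist_of_adj (h1 : ∀ u v, G.Adj u v → 1 ≤ w s(u, v))
    (hcycle : ∀ (a b : V) (h : G.Adj a b) (p : G.Walk b a),
      (Walk.cons h p).IsCycle → w s(a, b) ≤ p.mulWeight w)
    {u v : V} (huv : G.Adj u v) : G.mulDist w u v = w s(u, v) := by
  classical
  refine le_antisymm (by simpa using mulDist_le_mulWeight (.cons huv .nil)) ?_
  refine le_mulDist huv.reachable fun p => le_trans ?_ (p.mulWeight_bypass_le h1)
  by_cases hmem : s(u, v) ∈ p.bypass.edges
  · exact p.bypass.le_mulWeight_of_mem_edges h1 hmem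
  · have hcyc : (Walk.cons huv.symm p.bypass).IsCycle := by
      rw [Walk.cons_isCycle_iff, Sym2.eq_swap]
      exact ⟨p.bypass_isPath, hmem⟩
    simpa [Sym2.eq_swap] using hcycle v u huv.symm _ hcyc

end SimpleGraph

lemma IsPseudomultiplicativeMetric.le_mulWeight {V : Type*} {G : SimpleGraph V}
    {w : Sym2 V → ℝ≥0} {d : V → V → ℝ≥0} (hd : IsPseudomultiplicativeMetric d)
    (hdw : ∀ u v, G.Adj u v → d u v = w s(u, v)) {x y : V} (p : G.Walk x y) :
    d x y ≤ p.mulWeight w := by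
  induction p with
  | nil => simp [hd.self]
  | @cons x m y h p ih =>
    calc d x y ≤ d x m * d m y := hd.le_mul x m y
      _ ≤ w s(x, m) * p.mulWeight w := by rw [hdw x m h]; gcongr

/-- `w` extends to a pseudomultiplicative metric on `V(G)` iff
`w(e) ≥ 1` for every edge and, for every cycle `C` and every edge `e ∈ E(C)`,
`w(e) ≤ ∏_{ẽ ∈ C∖e} w(ẽ)`. -/
theorem stmt_15 {V : Type*} (G : SimpleGraph V) (w : Sym2 V → ℝ≥0) :
    (∃ d : V → V → ℝ≥0,
        (∀ x y, 1 ≤ d x y) ∧ (∀ x y, d x y = d y x) ∧ (∀ x, d x x = 1) ∧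
        (∀ x y z, d x z ≤ d x y * d y z) ∧
        ∀ u v, G.Adj u v → d u v = w s(u, v)) ↔
    ((∀ u v, G.Adj u v → 1 ≤ w s(u, v)) ∧
      ∀ (a b : V) (h : G.Adj a b) (p : G.Walk b a),
        (SimpleGraph.Walk.cons h p).IsCycle →
        w s(a, b) ≤ (p.edges.map w).prod) := by
  constructor
  · rintro ⟨d, hone, hsymm, hself, hmul, hdw⟩
    have hd : IsPseudomultiplicativeMetric d := ⟨hone, hsymm, hself, hmul⟩
    refine ⟨fun u v huv => hdw u v huv ▸ hd.one_le u v, fun a b h p _ => ?_⟩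
    calc w s(a, b) = d b a := by rw [← hdw a b h, hd.symm]
      _ ≤ p.mulWeight w := hd.le_mulWeight hdw p
  · rintro ⟨h1, hcycle⟩
    have hd := G.reachableSetoid.isPseudomultiplicativeMetric_glueDist (D := G.mulDist w)
      (fun _ _ => one_le_mulDist h1) (fun _ _ _ => mulDist_comm _ _) (mulDist_self h1)
      (fun _ _ _ => mulDist_le_mul)
    exact ⟨_, hd.one_le, hd.symm, hd.self, hd.le_mul, fun u v huv =>
      (Setoid.glueDist_of_rel huv.reachable).trans (mulDist_of_adj h1 hcycle huv)⟩
end
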